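/- arXiv:1203.3665 — 6 statements merged into one kernel-verified Lean document; each statement's English description precedes it below -/
import Mathlib

section
/- For each n and each real x ≥ 1, the unique solution (ξ_0, ξ_1, ..., ξ_{⌊n/2⌋}) of the lower-triangular linear system x^{k(n-k)} = Σ_{j=0}^{k} a_{kj} ξ_j for 0 ≤ k ≤ ⌊n/2⌋, where a_{kj} = k!(n-k)!/(j!(k-j)!(n-k-j)!), satisfies ξ_j ≥ 0 for all j. -/
open Finset

/-- Complete homogeneous symmetric polynomial `h_d (y 0, ..., y j)`. -/
noncomputable def Hcw (y : ℕ → ℝ) : ℕ → ℕ → ℝ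
  | 0, _ => 1
  | d+1, 0 => y 0 * Hcw y d 0
  | d+1, j+1 => Hcw y (d+1) j + y (j+1) * Hcw y d (j+1)
  termination_by d j => (d, j)

lemma Hcw_zero (y : ℕ → ℝ) (j : ℕ) : Hcw y 0 j = 1 := by simp [Hcw]

lemma Hcw_succ_zero (y : ℕ → ℝ) (d : ℕ) : Hcw y (d+1) 0 = y 0 * Hcw y d 0 := by
  simp [Hcw]

lemma Hcw_succ_succ (y : ℕ → ℝ) (d j : ℕ) :
    Hcw y (d+1) (j+1) = Hcw y (d+1) j + y (j+1) * Hcw y d (j+1) := by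
  rw [Hcw]

lemma Hcw_nonneg (y : ℕ → ℝ) (hy : ∀ i, 0 ≤ y i) : ∀ d j, 0 ≤ Hcw y d j := by
  intro d
  induction d using Nat.strong_induction_on with
  | _ d ihd =>
    match d with
    | 0 => intro j; rw [Hcw_zero]; norm_num
    | d+1 =>
      intro j
      induction j with
      | zero => rw [Hcw_succ_zero]; exact mul_nonneg (hy 0) (ihd d (by omega) 0)
      | succ j ihj =>
        rw [Hcw_succ_succ]
        exact add_nonneg ihj (mul_nonneg (hy (j+1)) (ihd d (by omega) (j+1)))

/-- Bound for summability: `h_d(y_0..y_j) ≤ (1 + y_0 + ... + y_j)^d`. -/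
lemma Hcw_le (y : ℕ → ℝ) (hy : ∀ i, 0 ≤ y i) :
    ∀ d j, Hcw y d j ≤ (1 + ∑ i ∈ range (j+1), y i) ^ d := by
  have hS0 : ∀ j, 0 ≤ ∑ i ∈ range (j+1), y i := fun j => Finset.sum_nonneg fun i _ => hy i
  have hS : ∀ j, 1 ≤ 1 + ∑ i ∈ range (j+1), y i := fun j => by linarith [hS0 j]
  intro d
  induction d using Nat.strong_induction_on with
  | _ d ihd =>
    match d with
    | 0 => intro j; rw [Hcw_zero, pow_zero]
    | d+1 =>
      intro j
      induction j with
      | zero =>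
        rw [Hcw_succ_zero, pow_succ]
        have h1 := ihd d (by omega) 0
        have hy0 := hy 0
        have hH := Hcw_nonneg y hy d 0
        have hle : y 0 ≤ 1 + ∑ i ∈ range 1, y i := by
          simp only [Finset.sum_range_one]; linarith
        have hp : (0:ℝ) ≤ (1 + ∑ i ∈ range 1, y i) ^ d :=
          pow_nonneg (by linarith [hS 0]) d
        calc y 0 * Hcw y d 0 ≤ y 0 * (1 + ∑ i ∈ range 1, y i) ^ d :=
              mul_le_mul_of_nonneg_left h1 hy0
          _ ≤ (1 + ∑ i ∈ range 1, y i) ^ d * (1 + ∑ i ∈ range 1, y i) := by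
              rw [mul_comm]; exact mul_le_mul_of_nonneg_left hle hp
      | succ j ihj =>
        rw [Hcw_succ_succ]
        have hsplit : 1 + ∑ i ∈ range (j+2), y i
            = (1 + ∑ i ∈ range (j+1), y i) + y (j+1) := by
          rw [Finset.sum_range_succ (n := j+1)]; ring
        have h1 : Hcw y (d+1) j ≤ (1 + ∑ i ∈ range (j+1), y i) ^ (d+1) := ihj
        have h2 : Hcw y d (j+1) ≤ (1 + ∑ i ∈ range (j+2), y i) ^ d :=
          ihd d (by omega) (j+1)
        have hmono : (1 + ∑ i ∈ range (j+1), y i) ^ d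
            ≤ (1 + ∑ i ∈ range (j+2), y i) ^ d := by
          apply pow_le_pow_left₀ (by linarith [hS j])
          rw [hsplit]; linarith [hy (j+1)]
        have hp : (0:ℝ) ≤ (1 + ∑ i ∈ range (j+2), y i) ^ d :=
          pow_nonneg (by linarith [hS (j+1)]) d
        calc Hcw y (d+1) j + y (j+1) * Hcw y d (j+1)
            ≤ (1 + ∑ i ∈ range (j+1), y i) ^ (d+1)
              + y (j+1) * (1 + ∑ i ∈ range (j+2), y i) ^ d := by
              have := mul_le_mul_of_nonneg_left h2 (hy (j+1))
              linarith
          _ ≤ (1 + ∑ i ∈ range (j+1), y i) * (1 + ∑ i ∈ range (j+2), y i) ^ d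
              + y (j+1) * (1 + ∑ i ∈ range (j+2), y i) ^ d := by
              rw [pow_succ]
              have := mul_le_mul_of_nonneg_left hmono
                (by linarith [hS j] : (0:ℝ) ≤ 1 + ∑ i ∈ range (j+1), y i)
              nlinarith [hmono, hS j, pow_nonneg (by linarith [hS j] : (0:ℝ) ≤ 1 + ∑ i ∈ range (j+1), y i) d]
          _ = (1 + ∑ i ∈ range (j+2), y i) ^ (d+1) := by
              rw [pow_succ, hsplit]; ring

/-- Newton expansion of the monomial `z ^ N` at arbitrary nodes. -/
lemma newton (y : ℕ → ℝ) (z : ℝ) : ∀ N : ℕ,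
    z ^ N = ∑ j ∈ range (N+1), (∏ i ∈ range j, (z - y i)) * Hcw y (N - j) j := by
  intro N
  induction N with
  | zero => simp [Hcw_zero]
  | succ N ih =>
    have key : z ^ (N+1) = z ^ N * z := pow_succ z N
    rw [key, ih, Finset.sum_mul]
    -- LHS = ∑_{j ≤ N} P j * H (N-j) j * z; split z = (z - y j) + y j
    have lhs_eq : ∀ j ∈ range (N+1),
        (∏ i ∈ range j, (z - y i)) * Hcw y (N - j) j * z
        = (∏ i ∈ range (j+1), (z - y i)) * Hcw y (N - j) j
          + y j * ((∏ i ∈ range j, (z - y i)) * Hcw y (N - j) j) := by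
      intro j _
      rw [Finset.prod_range_succ]
      ring
    rw [Finset.sum_congr rfl lhs_eq, Finset.sum_add_distrib]
    -- RHS: peel off the j = 0 term
    rw [Finset.sum_range_succ' (fun j => (∏ i ∈ range j, (z - y i)) * Hcw y (N + 1 - j) j) (N+1)]
    simp only [Finset.prod_range_zero, one_mul, Nat.sub_zero, Nat.succ_sub_succ_eq_sub]
    -- also peel j = 0 from second LHS sum
    rw [Finset.sum_range_succ' (fun j => y j * ((∏ i ∈ range j, (z - y i)) * Hcw y (N - j) j)) N]
    simp only [Finset.prod_range_zero, one_mul, Nat.sub_zero, Nat.succ_sub_succ_eq_sub]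
    rw [Hcw_succ_zero]
    -- peel top term j = N from first LHS sum, and top term j = N from RHS sum
    rw [Finset.sum_range_succ (fun j => (∏ i ∈ range (j+1), (z - y i)) * Hcw y (N - j) j) N]
    rw [Finset.sum_range_succ (fun j => (∏ i ∈ range (j+1), (z - y i)) * Hcw y (N - j) (j+1)) N]
    simp only [Nat.sub_self, Hcw_zero]
    have congr_mid : ∀ j ∈ range N,
        (∏ i ∈ range (j+1), (z - y i)) * Hcw y (N - j) (j+1)
        = (∏ i ∈ range (j+1), (z - y i)) * Hcw y (N - j) j
          + y (j+1) * ((∏ i ∈ range (j+1), (z - y i)) * Hcw y (N - (j+1)) (j+1)) := by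
      intro j hj
      have hjN : j < N := Finset.mem_range.mp hj
      obtain ⟨d, hd⟩ : ∃ d, N - j = d + 1 := ⟨N - j - 1, by omega⟩
      have hd2 : N - (j+1) = d := by omega
      rw [hd, hd2, Hcw_succ_succ]
      ring
    rw [Finset.sum_congr rfl congr_mid, Finset.sum_add_distrib]
    ring

/-- The nodes `y_k = k (n - k)` as real numbers. -/
noncomputable def Ycw (n : ℕ) (i : ℕ) : ℝ := ((i * (n - i) : ℕ) : ℝ)

lemma Ycw_nonneg (n i : ℕ) : 0 ≤ Ycw n i := Nat.cast_nonneg _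

/-- Evaluation of the Newton expansion at a node, truncated at `k`. -/
lemma eval_newton (y : ℕ → ℝ) (k N : ℕ) :
    ∑ j ∈ range (k+1), (∏ i ∈ range j, (y k - y i))
      * (if j ≤ N then Hcw y (N - j) j else 0) = (y k) ^ N := by
  rw [newton y (y k) N]
  rcases le_or_gt k N with h | h
  · rw [Finset.sum_congr rfl (fun j hj => by
      have : j ≤ N := by have := Finset.mem_range.mp hj; omega
      rw [if_pos this])]
    apply Finset.sum_subset (Finset.range_subset_range.mpr (by omega))
    intro j hj hj'
    have hkj : k < j := by
      have := Finset.mem_range.mp hj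
      simp only [Finset.mem_range, not_lt] at hj'
      omega
    have : (∏ i ∈ range j, (y k - y i)) = 0 :=
      Finset.prod_eq_zero (Finset.mem_range.mpr hkj) (sub_self _)
    rw [this, zero_mul]
  · symm
    have hcongr : ∀ j ∈ range (N+1), (∏ i ∈ range j, (y k - y i)) * Hcw y (N - j) j
        = (∏ i ∈ range j, (y k - y i)) * (if j ≤ N then Hcw y (N - j) j else 0) := by
      intro j hj
      rw [if_pos (by have := Finset.mem_range.mp hj; omega : j ≤ N)]
    rw [Finset.sum_congr rfl hcongr]
    apply Finset.sum_subset (Finset.range_subset_range.mpr (by omega))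
    intro j hj hj'
    have : ¬ j ≤ N := by
      simp only [Finset.mem_range, not_lt] at hj'
      omega
    rw [if_neg this, mul_zero]


/-- The matrix entries a_{kj} = k!(n-k)!/(j!(k-j)!(n-k-j)!) as real numbers. -/
noncomputable def aCW (n k j : ℕ) : ℝ :=
  ((Nat.factorial k * Nat.factorial (n - k) : ℕ) : ℝ) /
    ((Nat.factorial j * Nat.factorial (k - j) * Nat.factorial (n - k - j) : ℕ) : ℝ)

lemma aCW_mul_factorial (n k j : ℕ) (hjk : j ≤ k) (hk : k ≤ n / 2) :
    aCW n k j * (Nat.factorial j : ℝ) = ∏ i ∈ range j, (Ycw n k - Ycw n i) := by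
  have hkn : k ≤ n - k := by omega
  have hkn' : k ≤ n := by omega
  have hprod : ∀ i ∈ range j, Ycw n k - Ycw n i = (((k - i) * (n - k - i) : ℕ) : ℝ) := by
    intro i hi
    have hik : i < j := mem_range.mp hi
    have h1 : i ≤ k := by omega
    have h2 : i ≤ n - k := by omega
    have hin : i ≤ n := by omega
    unfold Ycw
    rw [Nat.cast_mul, Nat.cast_mul, Nat.cast_mul, Nat.cast_sub h2, Nat.cast_sub h1,
        Nat.cast_sub hkn', Nat.cast_sub hin]
    ring
  rw [Finset.prod_congr rfl hprod, ← Nat.cast_prod]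
  have hdesc : ∏ i ∈ range j, (k - i) * (n - k - i)
      = Nat.descFactorial k j * Nat.descFactorial (n - k) j := by
    rw [Finset.prod_mul_distrib, Nat.descFactorial_eq_prod_range,
      Nat.descFactorial_eq_prod_range]
  rw [hdesc]
  unfold aCW
  have hden : ((Nat.factorial j * Nat.factorial (k - j) * Nat.factorial (n - k - j) : ℕ) : ℝ) ≠ 0 := by
    exact_mod_cast Nat.mul_ne_zero (Nat.mul_ne_zero (Nat.factorial_ne_zero _)
      (Nat.factorial_ne_zero _)) (Nat.factorial_ne_zero _)
  rw [div_mul_eq_mul_div, div_eq_iff hden]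
  have hjnk : j ≤ n - k := le_trans hjk hkn
  have hnat : Nat.factorial k * Nat.factorial (n - k) * Nat.factorial j
      = Nat.descFactorial k j * Nat.descFactorial (n - k) j
        * (Nat.factorial j * Nat.factorial (k - j) * Nat.factorial (n - k - j)) := by
    rw [← Nat.factorial_mul_descFactorial hjk, ← Nat.factorial_mul_descFactorial hjnk]
    ring
  exact_mod_cast hnat

lemma aCW_pos (n k : ℕ) : 0 < aCW n k k := by
  unfold aCW
  apply div_pos
  · exact_mod_cast Nat.mul_pos (Nat.factorial_pos _) (Nat.factorial_pos _)
  · exact_mod_cast Nat.mul_pos (Nat.mul_pos (Nat.factorial_pos _) (Nat.factorial_pos _))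
      (Nat.factorial_pos _)

/-- For x ≥ 1, the solution of the triangular system
    x^{k(n-k)} = Σ_{j=0}^k a_{kj} ξ_j, 0 ≤ k ≤ ⌊n/2⌋, is nonnegative. -/
theorem stmt3 (n : ℕ) (x : ℝ) (hx : 1 ≤ x) (ξ : ℕ → ℝ)
    (hsys : ∀ k ≤ n / 2,
      x ^ (k * (n - k)) = ∑ j ∈ Finset.range (k + 1), aCW n k j * ξ j) :
    ∀ j ≤ n / 2, 0 ≤ ξ j := by
  have hx0 : (0:ℝ) < x := lt_of_lt_of_le one_pos hx
  set t := Real.log x with ht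
  have ht0 : 0 ≤ t := Real.log_nonneg hx
  set y := Ycw n with hy'
  have hy : ∀ i, 0 ≤ y i := Ycw_nonneg n
  set c : ℕ → ℕ → ℝ :=
    fun j N => if j ≤ N then t ^ N * Hcw y (N - j) j / (Nat.factorial N : ℝ) else 0 with hc
  have hc_nonneg : ∀ j N, 0 ≤ c j N := by
    intro j N
    rw [hc]
    dsimp only
    split
    · apply div_nonneg (mul_nonneg (pow_nonneg ht0 N) (Hcw_nonneg y hy _ _))
      exact_mod_cast Nat.zero_le _
    · exact le_refl 0
  have hc_summable : ∀ j, Summable (c j) := by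
    intro j
    set S : ℝ := 1 + ∑ i ∈ range (j+1), y i with hS
    have hS1 : (1:ℝ) ≤ S := by
      have : 0 ≤ ∑ i ∈ range (j+1), y i := Finset.sum_nonneg fun i _ => hy i
      rw [hS]; linarith
    refine Summable.of_nonneg_of_le (hc_nonneg j) (fun N => ?_)
      (Real.summable_pow_div_factorial (t * S))
    rw [hc]
    dsimp only
    split
    · rename_i hjN
      rw [mul_pow]
      have hH : Hcw y (N - j) j ≤ S ^ N :=
        le_trans (Hcw_le y hy (N - j) j) (pow_le_pow_right₀ hS1 (Nat.sub_le N j))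
      have hmul : t ^ N * Hcw y (N - j) j ≤ t ^ N * S ^ N :=
        mul_le_mul_of_nonneg_left hH (pow_nonneg ht0 N)
      have hfac : (0:ℝ) < (Nat.factorial N : ℝ) := by
        exact_mod_cast Nat.factorial_pos N
      exact div_le_div_of_nonneg_right hmul hfac.le
    · positivity
  set F : ℕ → ℝ := fun j => (Nat.factorial j : ℝ) * ∑' N, c j N with hF
  have hF_nonneg : ∀ j, 0 ≤ F j := by
    intro j
    rw [hF]
    dsimp only
    apply mul_nonneg (by exact_mod_cast Nat.zero_le _) (tsum_nonneg (hc_nonneg j))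
  have hsysF : ∀ k ≤ n / 2,
      x ^ (k * (n - k)) = ∑ j ∈ Finset.range (k + 1), aCW n k j * F j := by
    intro k hk
    have step1 : ∀ j ∈ range (k+1), aCW n k j * F j
        = ∑' N, (∏ i ∈ range j, (y k - y i)) * c j N := by
      intro j hj
      rw [hF]
      dsimp only
      rw [← mul_assoc, aCW_mul_factorial n k j (show j ≤ k by have := mem_range.mp hj; omega) hk, ← tsum_mul_left]
    rw [Finset.sum_congr rfl step1,
      ← Summable.tsum_finsetSum (fun j _ => Summable.mul_left _ (hc_summable j))]
    have inner : ∀ N : ℕ, (∑ j ∈ range (k+1), (∏ i ∈ range j, (y k - y i)) * c j N)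
        = (t * y k) ^ N / (Nat.factorial N : ℝ) := by
      intro N
      have hterm : ∀ j ∈ range (k+1), (∏ i ∈ range j, (y k - y i)) * c j N
          = ((∏ i ∈ range j, (y k - y i)) * (if j ≤ N then Hcw y (N - j) j else 0))
            * (t ^ N / (Nat.factorial N : ℝ)) := by
        intro j _
        rw [hc]
        dsimp only
        split
        · ring
        · simp
      rw [Finset.sum_congr rfl hterm, ← Finset.sum_mul, eval_newton y k N, mul_pow]
      ring
    rw [tsum_congr inner]
    have hexp : ∑' N : ℕ, (t * y k) ^ N / (Nat.factorial N : ℝ) = Real.exp (t * y k) := by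
      rw [Real.exp_eq_exp_ℝ, NormedSpace.exp_eq_tsum_div]
    rw [hexp, mul_comm t (y k)]
    have hyk : y k = ((k * (n - k) : ℕ) : ℝ) := rfl
    rw [hyk, Real.exp_nat_mul, Real.exp_log hx0]
  have huniq : ∀ k, k ≤ n / 2 → ξ k = F k := by
    intro k
    induction k using Nat.strong_induction_on with
    | _ k ih =>
      intro hk
      have h1 := hsys k hk
      have h2 := hsysF k hk
      rw [Finset.sum_range_succ] at h1 h2
      have hpre : ∑ j ∈ range k, aCW n k j * ξ j = ∑ j ∈ range k, aCW n k j * F j :=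
        Finset.sum_congr rfl fun j hj => by
          rw [ih j (mem_range.mp hj) (le_trans (le_of_lt (mem_range.mp hj)) hk)]
      have hcancel : aCW n k k * ξ k = aCW n k k * F k := by linarith
      exact mul_left_cancel₀ (ne_of_gt (aCW_pos n k)) hcancel
  intro j hj
  rw [huniq j hj]
  exact hF_nonneg j
end

section
/- For a finite function g: T → ℝ on a finite set T and a fixed element t ∈ T, the sum over all up-sets β of T (with respect to the preorder induced by g) containing t of (min{e^{g(s)} : s ∈ β} − max{e^{g(s)} : s ∉ β}) equals e^{g(t)}, where the max over the empty set is taken to be 0. -/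
attribute [local instance] Classical.propDecidable


open Finset

lemma tele (V : Finset ℝ) (h : V.Nonempty) :
    ∑ c ∈ V, (Real.exp c - sSup ↑((V.filter (fun a => a < c)).image Real.exp))
      = Real.exp (V.max' h) := by
  induction V using Finset.strongInduction with
  | _ V IH =>
  set m := V.max' h with hm
  have hmV : m ∈ V := V.max'_mem h
  rcases eq_or_ne V {m} with hV | hV
  · have hflt : ({m} : Finset ℝ).filter (fun a => a < m) = ∅ := by
      rw [Finset.filter_singleton, if_neg (lt_irrefl m)]
    rw [hV, Finset.sum_singleton, hflt]
    simp [Real.sSup_empty]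
  · -- V.erase m nonempty
    have hV' : (V.erase m).Nonempty := by
      rcases h with ⟨x, hx⟩
      by_contra hne
      rw [Finset.not_nonempty_iff_eq_empty] at hne
      apply hV
      apply Finset.eq_singleton_iff_unique_mem.mpr
      refine ⟨hmV, fun y hy => ?_⟩
      by_contra hy'
      exact (Finset.notMem_empty y) (hne ▸ Finset.mem_erase.mpr ⟨hy', hy⟩)
    set V' := V.erase m with hV'def
    have hsub : V' ⊂ V := Finset.erase_ssubset hmV
    have hins : V = insert m V' := (Finset.insert_erase hmV).symm
    have hmax' : ∀ c ∈ V', c < m := fun c hc => by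
      rcases Finset.mem_erase.mp hc with ⟨hne, hcV⟩
      exact lt_of_le_of_ne (V.le_max' c hcV) hne
    have hfilters : ∀ c ∈ V', V.filter (fun a => a < c) = V'.filter (fun a => a < c) := by
      intro c hc
      ext a
      simp only [Finset.mem_filter, hV'def, Finset.mem_erase]
      constructor
      · rintro ⟨ha, halt⟩
        exact ⟨⟨ne_of_lt (lt_trans halt (hmax' c hc)), ha⟩, halt⟩
      · rintro ⟨⟨_, ha⟩, halt⟩; exact ⟨ha, halt⟩
    have hfm : V.filter (fun a => a < m) = V' := by
      ext a
      simp only [Finset.mem_filter, hV'def, Finset.mem_erase]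
      constructor
      · rintro ⟨ha, halt⟩; exact ⟨ne_of_lt halt, ha⟩
      · rintro ⟨hne, ha⟩; exact ⟨ha, lt_of_le_of_ne (V.le_max' a ha) hne⟩
    have hmnot : m ∉ V' := Finset.notMem_erase m V
    have hsplit := Finset.sum_insert
      (f := fun c => Real.exp c - sSup ↑((V.filter (fun a => a < c)).image Real.exp)) hmnot
    rw [← hins] at hsplit
    rw [hsplit]
    have hsumV' : ∑ c ∈ V', (Real.exp c - sSup ↑((V.filter (fun a => a < c)).image Real.exp))
        = ∑ c ∈ V', (Real.exp c - sSup ↑((V'.filter (fun a => a < c)).image Real.exp)) := by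
      apply Finset.sum_congr rfl
      intro c hc
      rw [hfilters c hc]
    rw [hsumV', IH V' hsub hV']
    have him : (V'.image Real.exp).Nonempty := hV'.image _
    have : sSup ↑((V.filter (fun a => a < m)).image Real.exp) = Real.exp (V'.max' hV') := by
      rw [hfm, him.csSup_eq_max', Finset.max'_image Real.exp_monotone]
    rw [this]
    ring

lemma upset_char {T : Type} [Fintype T] [DecidableEq T] (g : T → ℝ) (β : Finset T)
    (hup : ∀ s ∈ β, ∀ s', g s ≤ g s' → s' ∈ β) (hne : (β.image g).Nonempty) (s' : T) :
    s' ∈ β ↔ (β.image g).min' hne ≤ g s' := by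
  constructor
  · intro hs'
    exact Finset.min'_le _ _ (Finset.mem_image_of_mem g hs')
  · intro hle
    obtain ⟨s0, hs0, hgs0⟩ := Finset.mem_image.mp ((β.image g).min'_mem hne)
    exact hup s0 hs0 s' (hgs0 ▸ hle)

/-- Telescoping identity: summing over all up-sets β (w.r.t. g) containing t of
(min{e^{g(s)} : s ∈ β} − max{e^{g(s)} : s ∉ β}) gives e^{g(t)}
(max over the empty set is 0, via sSup ∅ = 0 in ℝ). -/
theorem stmt10 (T : Type) [Fintype T] [DecidableEq T] (g : T → ℝ) (t : T) :
    (∑ β ∈ Finset.univ.filter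
        (fun β : Finset T => t ∈ β ∧ ∀ s ∈ β, ∀ s', g s ≤ g s' → s' ∈ β),
      (sInf ((fun s => Real.exp (g s)) '' (β : Set T)) -
        sSup ((fun s => Real.exp (g s)) '' ((β : Set T)ᶜ)))) = Real.exp (g t) := by

  classical
  set Vt : Finset ℝ := (Finset.univ.image g).filter (fun a => a ≤ g t) with hVt
  have hgtVt : g t ∈ Vt := by
    simp [hVt, Finset.mem_filter]
  have hVtne : Vt.Nonempty := ⟨g t, hgtVt⟩
  have hmaxVt : Vt.max' hVtne = g t := by
    refine le_antisymm ?_ (Vt.le_max' _ hgtVt)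
    have := Vt.max'_mem hVtne
    exact (Finset.mem_filter.mp this).2
  rw [show Real.exp (g t) = Real.exp (Vt.max' hVtne) by rw [hmaxVt]]
  rw [← tele Vt hVtne]
  refine Finset.sum_bij'
    (fun β hβ => (β.image g).min'
      ⟨g t, Finset.mem_image_of_mem g ((Finset.mem_filter.mp hβ).2.1)⟩)
    (fun c _ => Finset.univ.filter (fun s => c ≤ g s))
    ?_ ?_ ?_ ?_ ?_
  · -- hi : maps into Vt
    intro β hβ
    obtain ⟨-, htβ, hup⟩ := Finset.mem_filter.mp hβ
    have hne : (β.image g).Nonempty := ⟨g t, Finset.mem_image_of_mem g htβ⟩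
    rw [hVt, Finset.mem_filter]
    constructor
    · obtain ⟨s0, _, hgs0⟩ := Finset.mem_image.mp ((β.image g).min'_mem hne)
      exact Finset.mem_image.mpr ⟨s0, Finset.mem_univ s0, hgs0⟩
    · exact Finset.min'_le _ _ (Finset.mem_image_of_mem g htβ)
  · -- hj : maps into upset filter
    intro c hc
    rw [hVt, Finset.mem_filter] at hc
    refine Finset.mem_filter.mpr ⟨Finset.mem_univ _, ?_, ?_⟩
    · exact Finset.mem_filter.mpr ⟨Finset.mem_univ t, hc.2⟩
    · intro s hs s' hle
      exact Finset.mem_filter.mpr ⟨Finset.mem_univ s',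
        le_trans (Finset.mem_filter.mp hs).2 hle⟩
  · -- left_inv
    intro β hβ
    obtain ⟨-, htβ, hup⟩ := Finset.mem_filter.mp hβ
    have hne : (β.image g).Nonempty := ⟨g t, Finset.mem_image_of_mem g htβ⟩
    ext s
    rw [Finset.mem_filter]
    rw [upset_char g β hup hne s]
    simp
  · -- right_inv
    intro c hc
    rw [hVt, Finset.mem_filter] at hc
    obtain ⟨s0, -, hgs0⟩ := Finset.mem_image.mp hc.1
    have hs0 : s0 ∈ Finset.univ.filter (fun s => c ≤ g s) :=
      Finset.mem_filter.mpr ⟨Finset.mem_univ s0, le_of_eq hgs0.symm⟩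
    refine le_antisymm (Finset.min'_le _ _ (Finset.mem_image.mpr ⟨s0, hs0, hgs0⟩)) ?_
    apply Finset.le_min'
    intro a ha
    obtain ⟨s, hs, rfl⟩ := Finset.mem_image.mp ha
    exact (Finset.mem_filter.mp hs).2
  · -- summand equality
    intro β hβ
    obtain ⟨-, htβ, hup⟩ := Finset.mem_filter.mp hβ
    have hne : (β.image g).Nonempty := ⟨g t, Finset.mem_image_of_mem g htβ⟩
    set c : ℝ := (β.image g).min' hne with hc
    have hclet : c ≤ g t := Finset.min'_le _ _ (Finset.mem_image_of_mem g htβ)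
    -- sInf part
    have hβne : β.Nonempty := ⟨t, htβ⟩
    have h1 : sInf ((fun s => Real.exp (g s)) '' (β : Set T)) = Real.exp c := by
      rw [← Finset.coe_image, (hβne.image _).csInf_eq_min']
      have : β.image (fun s => Real.exp (g s)) = (β.image g).image Real.exp := by
        rw [Finset.image_image]; rfl
      rw [show (β.image (fun s => Real.exp (g s))).min' (hβne.image _)
          = ((β.image g).image Real.exp).min' (hne.image _) by congr 1]
      rw [Finset.min'_image Real.exp_monotone]
    -- sSup part
    have hcompl : (βᶜ : Finset T).image g = Vt.filter (fun a => a < c) := by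
      ext a
      simp only [Finset.mem_image, Finset.mem_compl, Finset.mem_filter, hVt,
        Finset.mem_image, Finset.mem_univ, true_and]
      constructor
      · rintro ⟨s, hs, rfl⟩
        rw [upset_char g β hup hne s] at hs
        push_neg at hs
        exact ⟨⟨⟨s, rfl⟩, le_of_lt (lt_of_lt_of_le hs hclet)⟩, hs⟩
      · rintro ⟨⟨⟨s, rfl⟩, -⟩, hlt⟩
        refine ⟨s, ?_, rfl⟩
        rw [upset_char g β hup hne s]
        exact not_le.mpr hlt
    have h2 : sSup ((fun s => Real.exp (g s)) '' ((β : Set T)ᶜ))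
        = sSup ↑((Vt.filter (fun a => a < c)).image Real.exp) := by
      rw [← Finset.coe_compl, ← Finset.coe_image, ← hcompl, Finset.image_image]
      rfl
    rw [h1, h2]
end

section
/- Consider the Ising potential on {−1,+1}^n with Φ_{i,j}(ω) = J_{ij} ω_i ω_j for pairs {i,j} and Φ_{i}(ω) = h_i ω_i for singletons, all other Φ_b ≡ 0, with all J_{ij} ≥ 0. A set b ⊆ [n] with |b| ≥ 2 fails to be inefficient with respect to ω (in the sense that there exist N ⊆ b and σ ∈ S^b with Φ_b(ω_b) + Φ_b(σ) > Φ_b(ω_N ∘ σ_{b∖N}) + Φ_b(σ_N ∘ ω_{b∖N})) if and only if b = {i,j} with J_{ij} > 0 and ω_i = ω_j. -/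
open Finset

private lemma phi_pair {n : ℕ} (J : Fin n → Fin n → ℝ) (h : Fin n → ℝ)
    (Φ : Finset (Fin n) → (Fin n → ℝ) → ℝ)
    (hΦ : ∀ b σ, Φ b σ =
      if b.card = 1 then ∑ i ∈ b, h i * σ i
      else if b.card = 2 then
        ∑ i ∈ b, ∑ j ∈ b, if i < j then J i j * σ i * σ j else 0
      else 0)
    {i j : Fin n} (hij : i < j) (f : Fin n → ℝ) :
    Φ {i, j} f = J i j * f i * f j := by
  have hne : i ≠ j := hij.ne
  have hcard : ({i, j} : Finset (Fin n)).card = 2 := Finset.card_pair hne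
  rw [hΦ, hcard]
  norm_num
  rw [Finset.sum_pair hne, Finset.sum_pair hne, Finset.sum_pair hne]
  simp [hij, hij.not_gt, lt_irrefl]

private lemma aux_core {n : ℕ} (J : Fin n → Fin n → ℝ) (h : Fin n → ℝ)
    (hJ : ∀ i j : Fin n, 0 ≤ J i j)
    (Φ : Finset (Fin n) → (Fin n → ℝ) → ℝ)
    (hΦ : ∀ b σ, Φ b σ =
      if b.card = 1 then ∑ i ∈ b, h i * σ i
      else if b.card = 2 then
        ∑ i ∈ b, ∑ j ∈ b, if i < j then J i j * σ i * σ j else 0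
      else 0)
    (ω : Fin n → ℝ) (hω : ∀ i, ω i = 1 ∨ ω i = -1)
    {i j : Fin n} (hij : i < j) (N : Finset (Fin n))
    (σ : Fin n → ℝ) (hσ : ∀ i, σ i = 1 ∨ σ i = -1)
    (hlt : Φ {i, j} (fun k => if k ∈ N then ω k else σ k) +
            Φ {i, j} (fun k => if k ∈ N then σ k else ω k) <
           Φ {i, j} ω + Φ {i, j} σ) :
    0 < J i j ∧ ω i = ω j := by
  rw [phi_pair J h Φ hΦ hij, phi_pair J h Φ hΦ hij, phi_pair J h Φ hΦ hij,
      phi_pair J h Φ hΦ hij] at hlt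
  by_cases hiN : i ∈ N <;> by_cases hjN : j ∈ N <;> simp [hiN, hjN] at hlt
  · -- i ∈ N, j ∉ N
    have hJpos : 0 < J i j := by
      rcases (hJ i j).eq_or_lt with hz | hp
      · rw [← hz] at hlt; simp at hlt
      · exact hp
    refine ⟨hJpos, ?_⟩
    rcases hω i with h1|h1 <;> rcases hω j with h2|h2 <;>
      rcases hσ i with h3|h3 <;> rcases hσ j with h4|h4 <;>
      rw [h1, h2, h3, h4] at hlt <;> rw [h1, h2] <;> norm_num <;> linarith
  · -- j ∈ N, i ∉ N
    have hJpos : 0 < J i j := by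
      rcases (hJ i j).eq_or_lt with hz | hp
      · rw [← hz] at hlt; simp at hlt
      · exact hp
    refine ⟨hJpos, ?_⟩
    rcases hω i with h1|h1 <;> rcases hω j with h2|h2 <;>
      rcases hσ i with h3|h3 <;> rcases hσ j with h4|h4 <;>
      rw [h1, h2, h3, h4] at hlt <;> rw [h1, h2] <;> norm_num <;> linarith
  · -- neither
    exfalso; linarith

/-- For the ferromagnetic Ising potential, a set b with |b| ≥ 2 fails to be
inefficient with respect to ω if and only if b = {i,j} with J_{ij} > 0 and ω_i = ω_j. -/
theorem stmt11 (n : ℕ) (J : Fin n → Fin n → ℝ) (h : Fin n → ℝ)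
    (hJ : ∀ i j : Fin n, 0 ≤ J i j)
    (Φ : Finset (Fin n) → (Fin n → ℝ) → ℝ)
    (hΦ : ∀ b σ, Φ b σ =
      if b.card = 1 then ∑ i ∈ b, h i * σ i
      else if b.card = 2 then
        ∑ i ∈ b, ∑ j ∈ b, if i < j then J i j * σ i * σ j else 0
      else 0)
    (ω : Fin n → ℝ) (hω : ∀ i, ω i = 1 ∨ ω i = -1)
    (b : Finset (Fin n)) (hb : 2 ≤ b.card) :
    (¬ (∀ N ⊆ b, ∀ σ : Fin n → ℝ, (∀ i, σ i = 1 ∨ σ i = -1) →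
        Φ b ω + Φ b σ ≤
          Φ b (fun i => if i ∈ N then ω i else σ i) +
            Φ b (fun i => if i ∈ N then σ i else ω i))) ↔
      ∃ i j : Fin n, i < j ∧ b = {i, j} ∧ 0 < J i j ∧ ω i = ω j := by
  constructor
  · intro hfail
    push_neg at hfail
    obtain ⟨N, hNb, σ, hσ, hlt⟩ := hfail
    rcases eq_or_lt_of_le hb with hc2 | hc3
    · obtain ⟨i, j, hne, rfl⟩ := Finset.card_eq_two.mp hc2.symm
      rcases hne.lt_or_gt with hij | hji
      · exact ⟨i, j, hij, rfl, aux_core J h hJ Φ hΦ ω hω hij N σ hσ hlt⟩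
      · rw [Finset.pair_comm] at hlt
        exact ⟨j, i, hji, Finset.pair_comm i j, aux_core J h hJ Φ hΦ ω hω hji N σ hσ hlt⟩
    · have hz : ∀ τ, Φ b τ = 0 := by
        intro τ; rw [hΦ, if_neg (by omega), if_neg (by omega)]
      rw [hz, hz, hz, hz] at hlt; linarith
  · rintro ⟨i, j, hij, rfl, hJpos, hωij⟩
    intro hall
    have key := hall {i} (by simp) (fun k => -ω k)
      (fun k => by rcases hω k with hk|hk <;> simp [hk])
    rw [phi_pair J h Φ hΦ hij, phi_pair J h Φ hΦ hij, phi_pair J h Φ hΦ hij,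
        phi_pair J h Φ hΦ hij] at key
    simp [hij.ne'] at key
    rcases hω i with h1|h1 <;> rcases hω j with h2|h2 <;> simp [h1, h2] at key hωij <;> linarith
end

section
/- Let μ be a probability distribution on {0,1}^n that is permutation-invariant and symmetric under global flip, i.e. μ(ω) = p_{|ω|} for |ω| ≤ ⌊n/2⌋ and μ(ω) = μ(ω̄) always. Suppose there exist ξ_j ≥ 0, 0 ≤ j ≤ ⌊n/2⌋, with p_k = Σ_{j=0}^k a_{kj} ξ_j for all k ≤ ⌊n/2⌋, where a_{kj} = k!(n−k)!/(j!(k−j)!(n−k−j)!). Then μ has a random-cluster representation whose base ν is supported on collections η whose active edges are pairwise disjoint two-element sets b with η_b = {(0,1),(1,0)}, with ν(η) proportional to ξ_{|η|} where |η| is the number of active edges. -/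
attribute [local instance] Classical.propDecidable

set_option linter.unusedSectionVars false
set_option linter.unusedVariables false
set_option maxHeartbeats 1000000


section
variable {α : Type*}

def validP (P : Finset (α × α)) : Prop :=
  ∀ q ∈ P, ∀ q' ∈ P, (q.1 = q'.1 ∨ q.2 = q'.2) → q = q'

noncomputable def MP (T F : Finset α) : Finset (Finset (α × α)) :=
  (T ×ˢ F).powerset.filter validP

lemma mem_MP {T F : Finset α} {P : Finset (α × α)} :
    P ∈ MP T F ↔ P ⊆ T ×ˢ F ∧ validP P := by
  simp [MP, Finset.mem_filter, Finset.mem_powerset]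

lemma descFactorial_succ' (m j : ℕ) :
    m.descFactorial (j + 1) = m * (m - 1).descFactorial j := by
  cases m with
  | zero => simp
  | succ m' => rw [Nat.succ_descFactorial_succ]; simp

lemma sum_MP (T : Finset α) : ∀ (F : Finset α) (g : ℕ → ℝ),
    ∑ P ∈ MP T F, g P.card
      = ∑ j ∈ Finset.range (T.card + 1),
          ((T.card.choose j * F.card.descFactorial j : ℕ) : ℝ) * g j := by
  induction T using Finset.induction_on with
  | empty =>
      intro F g
      have : MP (∅ : Finset α) F = {∅} := by
        ext P
        simp only [mem_MP, Finset.empty_product, Finset.subset_empty, Finset.mem_singleton]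
        constructor
        · rintro ⟨rfl, -⟩; rfl
        · rintro rfl; exact ⟨rfl, by intro q hq; simp at hq⟩
      rw [this]
      simp
  | @insert t T₀ ht ih =>
      intro F g
      classical
      -- split the sum
      have hsplit := Finset.sum_filter_add_sum_filter_not (MP (insert t T₀) F)
        (fun P => ∀ q ∈ P, q.1 ≠ t) (fun P => g P.card)
      -- first piece equals sum over MP T₀ F
      have h1 : (MP (insert t T₀) F).filter (fun P => ∀ q ∈ P, q.1 ≠ t) = MP T₀ F := by
        ext P
        simp only [Finset.mem_filter, mem_MP]
        constructor
        · rintro ⟨⟨hsub, hval⟩, hnot⟩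
          refine ⟨fun q hq => ?_, hval⟩
          have := hsub hq
          rw [Finset.mem_product] at this ⊢
          refine ⟨?_, this.2⟩
          rcases Finset.mem_insert.mp this.1 with h | h
          · exact absurd h (hnot q hq)
          · exact h
        · rintro ⟨hsub, hval⟩
          refine ⟨⟨hsub.trans ?_, hval⟩, fun q hq h => ?_⟩
          · exact Finset.product_subset_product (Finset.subset_insert _ _) le_rfl
          · have := (Finset.mem_product.mp (hsub hq)).1
            rw [h] at this; exact ht this
      -- second piece via bijection with sigma
      have h2 : ∑ P ∈ (MP (insert t T₀) F).filter (fun P => ¬ ∀ q ∈ P, q.1 ≠ t), g P.card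
          = ∑ f ∈ F, ∑ P' ∈ MP T₀ (F.erase f), g (P'.card + 1) := by
        rw [← Finset.sum_sigma F (fun f => MP T₀ (F.erase f)) (fun q => g (q.2.card + 1))]
        refine (Finset.sum_nbij (fun q => insert (t, q.1) q.2) ?_ ?_ ?_ ?_).symm
        · rintro ⟨f, P'⟩ hq
          simp only [Finset.mem_sigma, mem_MP] at hq
          obtain ⟨hf, hsub, hval⟩ := hq
          have htP' : ∀ q ∈ P', q.1 ≠ t ∧ q.2 ≠ f := by
            intro q hq
            have := Finset.mem_product.mp (hsub hq)
            exact ⟨fun h => ht (h ▸ this.1), fun h => (Finset.mem_erase.mp this.2).1 (h ▸ rfl)⟩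
          simp only [Finset.mem_filter, mem_MP]
          refine ⟨⟨?_, ?_⟩, ?_⟩
          · intro q hq
            rcases Finset.mem_insert.mp hq with rfl | hq
            · exact Finset.mem_product.mpr ⟨Finset.mem_insert_self _ _, hf⟩
            · have := Finset.mem_product.mp (hsub hq)
              exact Finset.mem_product.mpr ⟨Finset.mem_insert_of_mem this.1,
                Finset.mem_of_mem_erase this.2⟩
          · intro q hq q' hq' hor
            rcases Finset.mem_insert.mp hq with rfl | hq <;>
              rcases Finset.mem_insert.mp hq' with rfl | hq'
            · rfl
            · rcases hor with h | h
              · exact absurd h.symm (htP' q' hq').1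
              · exact absurd h.symm (htP' q' hq').2
            · rcases hor with h | h
              · exact absurd h (htP' q hq).1
              · exact absurd h (htP' q hq).2
            · exact hval q hq q' hq' hor
          · push_neg
            exact ⟨(t, f), Finset.mem_insert_self _ _, rfl⟩
        · rintro ⟨f, P'⟩ hq ⟨f₂, P₂⟩ hq₂ heq
          simp only [Finset.coe_sigma, Set.mem_sigma_iff, Finset.mem_coe, mem_MP] at hq hq₂
          simp only at heq
          have htP' : ∀ q ∈ P', (q : α × α).1 ≠ t := fun q h => fun hh =>
            ht (hh ▸ (Finset.mem_product.mp (hq.2.1 h)).1)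
          have htP₂ : ∀ q ∈ P₂, (q : α × α).1 ≠ t := fun q h => fun hh =>
            ht (hh ▸ (Finset.mem_product.mp (hq₂.2.1 h)).1)
          have hf : f = f₂ := by
            have : (t, f) ∈ insert (t, f₂) P₂ := heq ▸ Finset.mem_insert_self _ _
            rcases Finset.mem_insert.mp this with h | h
            · exact (Prod.mk.injEq _ _ _ _ ▸ h).2
            · exact absurd rfl (htP₂ _ h)
          subst hf
          have hP : P' = P₂ := by
            have h1 : (t, f) ∉ P' := fun h => htP' _ h rfl
            have h2 : (t, f) ∉ P₂ := fun h => htP₂ _ h rfl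
            have := congrArg (fun s => Finset.erase s (t, f)) heq
            simpa [Finset.erase_insert h1, Finset.erase_insert h2] using this
          simp [hP]
        · intro P hP
          simp only [Finset.coe_filter, Set.mem_setOf_eq, mem_MP] at hP
          obtain ⟨⟨hsub, hval⟩, hex⟩ := hP
          push_neg at hex
          obtain ⟨q, hqP, hq1⟩ := hex
          obtain ⟨a, f⟩ := q
          simp only at hq1
          rw [hq1] at hqP
          have hf : f ∈ F := (Finset.mem_product.mp (hsub hqP)).2
          refine ⟨⟨f, P.erase (t, f)⟩, ?_, ?_⟩
          · simp only [Finset.coe_sigma, Set.mem_sigma_iff, Finset.mem_coe, mem_MP]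
            refine ⟨hf, ?_, ?_⟩
            · intro q hq
              obtain ⟨hne, hqP'⟩ := Finset.mem_erase.mp hq
              have hm := Finset.mem_product.mp (hsub hqP')
              rw [Finset.mem_product]
              constructor
              · rcases Finset.mem_insert.mp hm.1 with h | h
                · exact absurd (hval q hqP' (t, f) hqP (Or.inl h)) hne
                · exact h
              · rw [Finset.mem_erase]
                refine ⟨fun h => hne ?_, hm.2⟩
                exact hval q hqP' (t, f) hqP (Or.inr h)
            · intro q hq q' hq' hor
              exact hval q (Finset.mem_of_mem_erase hq) q' (Finset.mem_of_mem_erase hq') hor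
          · simp only
            exact Finset.insert_erase hqP
        · rintro ⟨f, P'⟩ hq
          simp only [Finset.mem_sigma, mem_MP] at hq
          have : (t, f) ∉ P' := fun h =>
            ht ((Finset.mem_product.mp (hq.2.1 h)).1)
          simp [Finset.card_insert_of_notMem this]
      rw [← hsplit, h1, h2]
      rw [ih F g]
      have hih2 : ∀ f ∈ F, ∑ P' ∈ MP T₀ (F.erase f), g (P'.card + 1)
          = ∑ j ∈ Finset.range (T₀.card + 1),
              ((T₀.card.choose j * (F.card - 1).descFactorial j : ℕ) : ℝ) * g (j + 1) := by
        intro f hf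
        rw [ih (F.erase f) (fun j => g (j + 1)), Finset.card_erase_of_mem hf]
      rw [Finset.sum_congr rfl hih2, Finset.sum_const, Finset.card_insert_of_notMem ht]
      set k := T₀.card with hk
      set m := F.card with hm
      rw [nsmul_eq_mul]
      -- now pure identity
      rw [Finset.sum_range_succ' (fun j => ((k.choose j * m.descFactorial j : ℕ) : ℝ) * g j) k]
      rw [Finset.sum_range_succ'
        (fun j => (((k+1).choose j * m.descFactorial j : ℕ) : ℝ) * g j) (k+1)]
      have hsplit2 : ∀ j, ((((k+1).choose (j+1) * m.descFactorial (j+1) : ℕ) : ℝ)) * g (j+1)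
          = ((k.choose j * m.descFactorial (j+1) : ℕ) : ℝ) * g (j+1)
            + ((k.choose (j+1) * m.descFactorial (j+1) : ℕ) : ℝ) * g (j+1) := by
        intro j
        rw [Nat.choose_succ_succ]
        push_cast
        ring
      rw [Finset.sum_congr rfl (fun j _ => hsplit2 j), Finset.sum_add_distrib]
      have hlast : ∑ j ∈ Finset.range (k + 1),
          ((k.choose j * m.descFactorial (j+1) : ℕ) : ℝ) * g (j+1)
          = m * ∑ j ∈ Finset.range (k + 1),
              ((k.choose j * (m - 1).descFactorial j : ℕ) : ℝ) * g (j + 1) := by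
        rw [Finset.mul_sum]
        refine Finset.sum_congr rfl fun j _ => ?_
        rw [descFactorial_succ' m j]
        push_cast
        ring
      have hend : ∑ j ∈ Finset.range (k+1),
          ((k.choose (j+1) * m.descFactorial (j+1) : ℕ) : ℝ) * g (j+1)
          = ∑ j ∈ Finset.range k,
              ((k.choose (j+1) * m.descFactorial (j+1) : ℕ) : ℝ) * g (j+1) := by
        rw [Finset.sum_range_succ]
        simp [Nat.choose_succ_self]
      rw [hlast, hend]
      simp only [Nat.choose_zero_right, Nat.descFactorial_zero, Nat.mul_one, Nat.one_mul,
        Nat.cast_one, one_mul]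
      ring

lemma key_cast (k m j : ℕ) (hjk : j ≤ k) (hjm : j ≤ m) :
    ((k.choose j * m.descFactorial j : ℕ) : ℝ)
      = ((Nat.factorial k * Nat.factorial m : ℕ) : ℝ) /
        ((Nat.factorial j * Nat.factorial (k - j) * Nat.factorial (m - j) : ℕ) : ℝ) := by
  rw [eq_div_iff (by positivity)]
  have h1 : k.choose j * j.factorial * (k - j).factorial = k.factorial :=
    Nat.choose_mul_factorial_mul_factorial hjk
  have h2 : (m - j).factorial * m.descFactorial j = m.factorial :=
    Nat.factorial_mul_descFactorial hjm
  push_cast [← h1, ← h2]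
  ring

noncomputable def mixed {n : ℕ} (b : Finset (Fin n)) : Finset ({x : Fin n // x ∈ b} → Bool) :=
  Finset.univ.filter (fun σ => ∃ x y, σ x ≠ σ y)

lemma mixed_ne_univ {n : ℕ} (b : Finset (Fin n)) : mixed b ≠ Finset.univ := by
  intro h
  have : (fun _ => true) ∈ mixed b := h ▸ Finset.mem_univ _
  obtain ⟨x, y, hxy⟩ := (Finset.mem_filter.mp this).2
  exact hxy rfl

noncomputable def etaOf {n : ℕ} (P : Finset (Fin n × Fin n)) :
    (b : Finset (Fin n)) → Finset ({x : Fin n // x ∈ b} → Bool) :=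
  fun b => if ∃ q ∈ P, b = {q.1, q.2} then mixed b else Finset.univ


/-- A symmetric permutation-invariant distribution on {0,1}^n whose weights p_k solve
p_k = Σ_j a_{kj} ξ_j with ξ_j ≥ 0 has a random-cluster representation whose base is
supported on collections η whose active edges are pairwise disjoint two-element sets b
with η_b = {(0,1),(1,0)}, with weight proportional to ξ_{number of active edges}. -/
theorem stmt15 (n : ℕ) (μ : (Fin n → Bool) → ℝ) (p : ℕ → ℝ)
    (hperm : ∀ ω : Fin n → Bool,
      (Finset.univ.filter (fun i => ω i = true)).card ≤ n / 2 →
        μ ω = p (Finset.univ.filter (fun i => ω i = true)).card)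
    (hsymm : ∀ ω : Fin n → Bool, μ ω = μ (fun i => !(ω i)))
    (ξ : ℕ → ℝ) (hξ : ∀ j, 0 ≤ ξ j)
    (hp : ∀ k ≤ n / 2, p k = ∑ j ∈ Finset.range (k + 1), aCW n k j * ξ j) :
    ∃ ν : ((b : Finset (Fin n)) → Finset ({x : Fin n // x ∈ b} → Bool)) → ℝ,
      ∃ c : ℝ, 0 < c ∧
      (∀ η, ν η =
        if (∀ b : Finset (Fin n), η b ≠ Finset.univ →
              b.card = 2 ∧
                η b = Finset.univ.filter
                  (fun σ : {x : Fin n // x ∈ b} → Bool => ∃ x y, σ x ≠ σ y)) ∧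
            (∀ b b' : Finset (Fin n), η b ≠ Finset.univ → η b' ≠ Finset.univ →
              b = b' ∨ Disjoint b b')
        then c * ξ (Finset.univ.filter
            (fun b : Finset (Fin n) => η b ≠ Finset.univ)).card
        else 0) ∧
      ∃ d : ℝ, 0 < d ∧ ∀ ω : Fin n → Bool,
        μ ω = d * ∑ η ∈ Finset.univ.filter
          (fun η : (b : Finset (Fin n)) → Finset ({x : Fin n // x ∈ b} → Bool) =>
            ∀ b, (fun x : {x : Fin n // x ∈ b} => ω x.1) ∈ η b), ν η := by
  set Adm : ((b : Finset (Fin n)) → Finset ({x : Fin n // x ∈ b} → Bool)) → Prop :=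
    fun η => (∀ b : Finset (Fin n), η b ≠ Finset.univ →
              b.card = 2 ∧ η b = mixed b) ∧
            (∀ b b' : Finset (Fin n), η b ≠ Finset.univ → η b' ≠ Finset.univ →
              b = b' ∨ Disjoint b b') with hAdmdef
  refine ⟨fun η => if Adm η then
      ξ (Finset.univ.filter (fun b : Finset (Fin n) => η b ≠ Finset.univ)).card else 0,
    1, one_pos, fun η => by rw [one_mul]; rfl, 1, one_pos, fun ω => ?_⟩
  rw [one_mul]
  set T := Finset.univ.filter (fun i => ω i = true) with hT
  set F := Finset.univ.filter (fun i => ω i = false) with hF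
  set k := T.card with hk
  set m := F.card with hm
  have hmemT : ∀ i : Fin n, i ∈ T ↔ ω i = true := by intro i; simp [hT]
  have hmemF : ∀ i : Fin n, i ∈ F ↔ ω i = false := by intro i; simp [hF]
  have hkm : k + m = n := by
    rw [hk, hm, hT, hF]
    have heq : (Finset.univ.filter (fun i : Fin n => ω i = false))
        = (Finset.univ.filter (fun i : Fin n => ¬ (ω i = true))) := by
      apply Finset.filter_congr; intro i _; simp
    rw [heq, Finset.card_filter_add_card_filter_not]
    simp
  -- basic pair facts
  have hq_ne : ∀ q ∈ T ×ˢ F, q.1 ≠ q.2 := by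
    rintro ⟨a, b⟩ hq h
    rw [Finset.mem_product] at hq
    have h' : a = b := h
    have h1 := (hmemT a).mp hq.1
    have h2 := (hmemF b).mp hq.2
    rw [h'] at h1; rw [h1] at h2; exact Bool.noConfusion h2
  have hpair_inj : ∀ q ∈ T ×ˢ F, ∀ q' ∈ T ×ˢ F,
      ({q.1, q.2} : Finset (Fin n)) = {q'.1, q'.2} → q = q' := by
    rintro ⟨a, b⟩ hq ⟨a', b'⟩ hq' h
    rw [Finset.mem_product] at hq hq'
    simp only at *
    have ha : a ∈ ({a', b'} : Finset (Fin n)) := h ▸ (by simp)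
    have hb : b ∈ ({a', b'} : Finset (Fin n)) := h ▸ (by simp)
    simp only [Finset.mem_insert, Finset.mem_singleton] at ha hb
    have haa : a = a' := by
      rcases ha with h1 | h1
      · exact h1
      · exfalso
        have := (hmemT a).mp hq.1
        rw [h1, (hmemF b').mp hq'.2] at this
        exact Bool.noConfusion this
    have hbb : b = b' := by
      rcases hb with h1 | h1
      · exfalso
        have := (hmemF b).mp hq.2
        rw [h1, (hmemT a').mp hq'.1] at this
        exact Bool.noConfusion this
      · exact h1
    simp [haa, hbb]
  have hactive_iff : ∀ (P : Finset (Fin n × Fin n)) (b : Finset (Fin n)),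
      etaOf P b ≠ Finset.univ ↔ ∃ q ∈ P, b = {q.1, q.2} := by
    intro P b
    unfold etaOf
    split_ifs with h
    · simpa [mixed_ne_univ b] using h
    · simpa using h
  have hfilter_eq : ∀ P : Finset (Fin n × Fin n),
      Finset.univ.filter (fun b => etaOf P b ≠ Finset.univ)
        = P.image (fun q => ({q.1, q.2} : Finset (Fin n))) := by
    intro P
    ext b
    simp only [Finset.mem_filter, Finset.mem_univ, true_and, hactive_iff, Finset.mem_image]
    constructor
    · rintro ⟨q, hq, rfl⟩; exact ⟨q, hq, rfl⟩
    · rintro ⟨q, hq, rfl⟩; exact ⟨q, hq, rfl⟩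
  have hact : ∀ P ∈ MP T F,
      (Finset.univ.filter (fun b => etaOf P b ≠ Finset.univ)).card = P.card := by
    intro P hP
    rw [hfilter_eq]
    apply Finset.card_image_of_injOn
    intro q hq q' hq' h
    exact hpair_inj q ((mem_MP.mp hP).1 hq) q' ((mem_MP.mp hP).1 hq') h
  -- step A : restrict the sum to admissible η
  rw [← Finset.sum_filter, Finset.filter_filter]
  -- step B : bijection with MP T F
  have hbij : ∑ P ∈ MP T F, ξ P.card
      = ∑ η ∈ Finset.univ.filter
          (fun η : (b : Finset (Fin n)) → Finset ({x : Fin n // x ∈ b} → Bool) =>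
            (∀ b, (fun x : {x : Fin n // x ∈ b} => ω x.1) ∈ η b) ∧ Adm η),
          ξ (Finset.univ.filter (fun b => η b ≠ Finset.univ)).card := by
    refine Finset.sum_nbij (i := fun P => etaOf P) ?_ ?_ ?_ ?_
    · -- maps to
      intro P hP
      obtain ⟨hsub, hval⟩ := mem_MP.mp hP
      simp only [Finset.mem_filter, Finset.mem_univ, true_and]
      refine ⟨?_, ?_, ?_⟩
      · -- compatible
        intro b
        unfold etaOf
        split_ifs with h
        · obtain ⟨q, hq, rfl⟩ := h
          have hqm := Finset.mem_product.mp (hsub hq)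
          refine Finset.mem_filter.mpr ⟨Finset.mem_univ _, ?_⟩
          refine ⟨⟨q.1, by simp⟩, ⟨q.2, by simp⟩, ?_⟩
          simp only
          rw [(hmemT q.1).mp hqm.1, (hmemF q.2).mp hqm.2]
          simp
        · exact Finset.mem_univ _
      · -- Adm first part
        intro b hb
        obtain ⟨q, hq, rfl⟩ := (hactive_iff P b).mp hb
        constructor
        · exact Finset.card_pair (hq_ne q (hsub hq))
        · unfold etaOf
          rw [if_pos ⟨q, hq, rfl⟩]
      · -- Adm second part
        intro b b' hb hb'
        obtain ⟨q, hq, rfl⟩ := (hactive_iff P b).mp hb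
        obtain ⟨q', hq', rfl⟩ := (hactive_iff P b').mp hb'
        rw [or_iff_not_imp_right]
        intro hd
        obtain ⟨x, hx, hx'⟩ := Finset.not_disjoint_iff.mp hd
        simp only [Finset.mem_insert, Finset.mem_singleton] at hx hx'
        have hqq : q = q' := by
          apply hval q hq q' hq'
          rcases hx with rfl | rfl <;> rcases hx' with h | h
          · exact Or.inl h
          · exfalso
            have h1 := (hmemT q.1).mp (Finset.mem_product.mp (hsub hq)).1
            have h2 := (hmemF q'.2).mp (Finset.mem_product.mp (hsub hq')).2
            rw [h] at h1; rw [h1] at h2; exact Bool.noConfusion h2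
          · exfalso
            have h1 := (hmemF q.2).mp (Finset.mem_product.mp (hsub hq)).2
            have h2 := (hmemT q'.1).mp (Finset.mem_product.mp (hsub hq')).1
            rw [h] at h1; rw [h1] at h2; exact Bool.noConfusion h2
          · exact Or.inr h
        rw [hqq]
    · -- injective
      intro P hP P' hP' h
      simp only [Finset.mem_coe] at hP hP'
      have h' : etaOf P = etaOf P' := h
      have himg : Finset.image (fun q => ({q.1, q.2} : Finset (Fin n))) P
          = Finset.image (fun q => ({q.1, q.2} : Finset (Fin n))) P' := by
        rw [← hfilter_eq, ← hfilter_eq, h']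
      apply Finset.Subset.antisymm
      · intro q hq
        have : ({q.1, q.2} : Finset (Fin n)) ∈ P'.image _ := himg ▸ Finset.mem_image_of_mem _ hq
        obtain ⟨q', hq', heq⟩ := Finset.mem_image.mp this
        rwa [hpair_inj q' ((mem_MP.mp hP').1 hq') q ((mem_MP.mp hP).1 hq) heq] at hq'
      · intro q hq
        have : ({q.1, q.2} : Finset (Fin n)) ∈ P.image _ := himg ▸ Finset.mem_image_of_mem _ hq
        obtain ⟨q', hq', heq⟩ := Finset.mem_image.mp this
        rwa [hpair_inj q' ((mem_MP.mp hP).1 hq') q ((mem_MP.mp hP').1 hq) heq] at hq'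
    · -- surjective
      intro η hη
      simp only [Finset.coe_filter, Set.mem_setOf_eq, Finset.mem_univ, true_and] at hη
      obtain ⟨hcompat, hAdm1, hAdm2⟩ := hη
      set P := (T ×ˢ F).filter (fun q => η {q.1, q.2} ≠ Finset.univ) with hPdef
      have hPsub : P ⊆ T ×ˢ F := Finset.filter_subset _ _
      refine ⟨P, ?_, ?_⟩
      · simp only [Finset.mem_coe, mem_MP]
        refine ⟨hPsub, ?_⟩
        intro q hq q' hq' hor
        have hq2 := (Finset.mem_filter.mp hq).2
        have hq2' := (Finset.mem_filter.mp hq').2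
        have hnd : ¬ Disjoint ({q.1, q.2} : Finset (Fin n)) {q'.1, q'.2} := by
          rcases hor with h | h
          · exact Finset.not_disjoint_iff.mpr ⟨q.1, by simp, by simp [h]⟩
          · exact Finset.not_disjoint_iff.mpr ⟨q.2, by simp, by simp [h]⟩
        rcases hAdm2 _ _ hq2 hq2' with h | h
        · exact hpair_inj q (hPsub hq) q' (hPsub hq') h
        · exact absurd h hnd
      · funext b
        show (if ∃ q ∈ P, b = ({q.1, q.2} : Finset (Fin n)) then mixed b
          else Finset.univ) = η b
        split_ifs with h
        · obtain ⟨q, hq, rfl⟩ := h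
          exact ((hAdm1 _ (Finset.mem_filter.mp hq).2).2).symm
        · by_contra hne
          have hne' : η b ≠ Finset.univ := fun hh => hne (by rw [hh])
          obtain ⟨hcard, hmix⟩ := hAdm1 b hne'
          have hcomp := hcompat b
          rw [hmix] at hcomp
          obtain ⟨x, y, hxy⟩ := (Finset.mem_filter.mp hcomp).2
          simp only at hxy
          have hxyne : (x : Fin n) ≠ y := fun hh => hxy (by rw [hh])
          have hbeq : ({(x : Fin n), (y : Fin n)} : Finset (Fin n)) = b := by
            apply Finset.eq_of_subset_of_card_le
            · intro z hz
              simp only [Finset.mem_insert, Finset.mem_singleton] at hz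
              rcases hz with rfl | rfl
              · exact x.2
              · exact y.2
            · rw [hcard, Finset.card_pair hxyne]
          apply h
          cases hωx : ω (x : Fin n) with
          | true =>
            have hωy : ω (y : Fin n) = false := by
              cases hωy : ω (y : Fin n) with
              | true => rw [hωx, hωy] at hxy; exact absurd rfl hxy
              | false => rfl
            refine ⟨((x : Fin n), (y : Fin n)), ?_, hbeq.symm⟩
            rw [hPdef, Finset.mem_filter]
            refine ⟨Finset.mem_product.mpr ⟨(hmemT _).mpr hωx, (hmemF _).mpr hωy⟩, ?_⟩
            simp only
            rw [hbeq]
            exact hne'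
          | false =>
            have hωy : ω (y : Fin n) = true := by
              cases hωy : ω (y : Fin n) with
              | true => rfl
              | false => rw [hωx, hωy] at hxy; exact absurd rfl hxy
            refine ⟨((y : Fin n), (x : Fin n)), ?_, ?_⟩
            · rw [hPdef, Finset.mem_filter]
              refine ⟨Finset.mem_product.mpr ⟨(hmemT _).mpr hωy, (hmemF _).mpr hωx⟩, ?_⟩
              simp only
              rw [Finset.pair_comm, hbeq]
              exact hne'
            · simp only
              rw [Finset.pair_comm, hbeq]
    · -- values
      intro P hP
      rw [hact P hP]
  -- step C : counting
  rw [← hbij, sum_MP T F ξ]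
  by_cases hcase : k ≤ n / 2
  · have hμ : μ ω = p k := by
      have := hperm ω
      rw [← hT, ← hk] at this
      exact this hcase
    rw [hμ, hp k hcase]
    apply Finset.sum_congr rfl
    intro j hj
    rw [Finset.mem_range] at hj
    have hjk : j ≤ k := by omega
    have hjm : j ≤ m := by omega
    have hnk : n - k = m := by omega
    rw [key_cast k m j hjk hjm]
    congr 1
    unfold aCW
    rw [hnk]
  · have hmn : m ≤ n / 2 := by omega
    have hmk : m + 1 ≤ k + 1 := by omega
    have hflip : μ ω = p m := by
      rw [hsymm ω]
      have hfe : (Finset.univ.filter (fun i => (!(ω i)) = true)) = F := by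
        rw [hF]; apply Finset.filter_congr; intro i _; simp
      have h2 := hperm (fun i => !(ω i))
      rw [hfe] at h2
      rw [h2 hmn, hm]
    rw [hflip, hp m hmn]
    rw [← Finset.sum_subset (Finset.range_subset_range.mpr hmk) (fun j _ hj2 => ?_)]
    · apply Finset.sum_congr rfl
      intro j hj
      rw [Finset.mem_range] at hj
      have hjm : j ≤ m := by omega
      have hjk : j ≤ k := by omega
      have hnm : n - m = k := by omega
      rw [key_cast k m j hjk hjm]
      congr 1
      unfold aCW
      rw [hnm]
      push_cast
      ring
    · rw [Finset.mem_range] at hj2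
      have : m.descFactorial j = 0 := Nat.descFactorial_eq_zero_iff_lt.mpr (by omega)
      rw [this]
      simp
end
end

section
/- Let μ be a probability measure on S^n satisfying the negative lattice condition if and only if for every M ⊆ [n] and α ∈ S^M (with S = {−1,+1}), the folding μ^{(α)}(σ) = (1/Z)μ(α∘σ)μ(α∘σ̄) satisfies μ^{(α)}(σ) ≥ μ^{(α)}(𝟙) for all σ ∈ {−1,+1}^{M^c}, where 𝟙 is the all-+1 configuration on M^c. Prove this equivalence. -/
attribute [local instance] Classical.propDecidable

/-- The negative lattice condition holds if and only if every folding μ^{(α)}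
attains its minimum at the all-+1 configuration:
μ(α∘σ)·μ(α∘σ̄) ≥ μ(α∘𝟙)·μ(α∘𝟙̄) for all M, α, σ.
Spins are encoded by Bool (true = +1, false = -1), with coordinatewise sup/inf. -/
theorem stmt16 (n : ℕ) (μ : (Fin n → Bool) → ℝ) :
    (∀ ω ω' : Fin n → Bool,
      μ (fun i => ω i || ω' i) * μ (fun i => ω i && ω' i) ≤ μ ω * μ ω') ↔
    (∀ M : Finset (Fin n), ∀ α : {x : Fin n // x ∈ M} → Bool,
      ∀ σ : {x : Fin n // x ∉ M} → Bool,
        μ (fun i => if hi : i ∈ M then α ⟨i, hi⟩ else true) *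
            μ (fun i => if hi : i ∈ M then α ⟨i, hi⟩ else false) ≤
          μ (fun i => if hi : i ∈ M then α ⟨i, hi⟩ else σ ⟨i, hi⟩) *
            μ (fun i => if hi : i ∈ M then α ⟨i, hi⟩ else !(σ ⟨i, hi⟩))) := by
  constructor
  · intro h M α σ
    have := h (fun i => if hi : i ∈ M then α ⟨i, hi⟩ else σ ⟨i, hi⟩)
      (fun i => if hi : i ∈ M then α ⟨i, hi⟩ else !(σ ⟨i, hi⟩))
    convert this using 3 <;> funext i <;> by_cases hi : i ∈ M <;>
      simp [hi] <;> cases σ ⟨i, hi⟩ <;> simp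
  · intro h ω ω'
    classical
    set M : Finset (Fin n) := Finset.univ.filter (fun i => ω i = ω' i) with hM
    have hmem : ∀ i, i ∈ M ↔ ω i = ω' i := by
      intro i; simp [hM]
    have := h M (fun x => ω x.1) (fun x => ω x.1)
    convert this using 3 <;> funext i <;> by_cases hi : i ∈ M <;>
      simp [hi] <;>
      first
        | (have := (hmem i).mp hi; simp [this])
        | (have hne : ω i ≠ ω' i := fun hc => hi ((hmem i).mpr hc)
           revert hne; cases ω i <;> cases ω' i <;> simp)
end

section
/- Let μ be the Curie-Weiss measure with three-body interactions on {−1,+1}^n, μ(ω) = (1/Z)exp(h Σ_i ω_i + J_2 Σ_{i<j} ω_i ω_j + J_3 Σ_{i<j<k} ω_i ω_j ω_k). Then for every M ⊆ [n] and α ∈ {−1,+1}^M, the folding μ^{(α)}(σ) = (1/Z')μ(α∘σ)μ(α∘σ̄) on {−1,+1}^{M^c} is of the form (1/Z'')exp(J' Σ_{i<j, i,j ∈ M^c} σ_i σ_j) for some constant J' depending on α; that is, all odd-order interaction terms cancel in the folding. -/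
attribute [local instance] Classical.propDecidable

open Finset

lemma sumPair (n : ℕ) (t : Fin n → ℝ) :
    2 * (∑ i : Fin n, ∑ j : Fin n, if i < j then t i * t j else 0)
      = (∑ i, t i)^2 - ∑ i, (t i)^2 := by
  have key : ∀ i j : Fin n, t i * t j =
      (if i < j then t i * t j else 0) + (if j < i then t i * t j else 0) +
      (if i = j then t i * t j else 0) := by
    intro i j
    rcases lt_trichotomy i j with hl|he|hg
    · rw [if_pos hl, if_neg (asymm hl), if_neg hl.ne]; ring
    · subst he; rw [if_neg (lt_irrefl i), if_pos rfl]; ring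
    · rw [if_neg (asymm hg), if_pos hg, if_neg hg.ne']; ring
  have hsq : (∑ i, t i)^2 = ∑ i : Fin n, ∑ j : Fin n, t i * t j := by
    rw [sq, Finset.sum_mul_sum]
  rw [hsq]
  have h1 : ∑ i : Fin n, ∑ j : Fin n, t i * t j =
      (∑ i : Fin n, ∑ j : Fin n, if i < j then t i * t j else 0) +
      (∑ i : Fin n, ∑ j : Fin n, if j < i then t i * t j else 0) +
      (∑ i : Fin n, ∑ j : Fin n, if i = j then t i * t j else 0) := by
    rw [← Finset.sum_add_distrib, ← Finset.sum_add_distrib]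
    refine Finset.sum_congr rfl fun i _ => ?_
    rw [← Finset.sum_add_distrib, ← Finset.sum_add_distrib]
    exact Finset.sum_congr rfl fun j _ => key i j
  have h2 : (∑ i : Fin n, ∑ j : Fin n, if j < i then t i * t j else 0)
      = ∑ i : Fin n, ∑ j : Fin n, if i < j then t i * t j else 0 := by
    rw [Finset.sum_comm]
    refine Finset.sum_congr rfl fun i _ => Finset.sum_congr rfl fun j _ => ?_
    split_ifs with hij
    · ring
    · rfl
  have h3 : (∑ i : Fin n, ∑ j : Fin n, if i = j then t i * t j else 0) = ∑ i, (t i)^2 := by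
    refine Finset.sum_congr rfl fun i _ => ?_
    rw [Finset.sum_ite_eq (Finset.univ) i (fun j => t i * t j)]
    simp [sq]
  rw [h1, h2, h3]; ring
lemma sumTriple (n : ℕ) (t : Fin n → ℝ) :
    6 * (∑ i : Fin n, ∑ j : Fin n, ∑ k : Fin n,
        if i < j ∧ j < k then t i * t j * t k else 0)
      = (∑ i, t i)^3 - 3 * (∑ i, t i) * (∑ i, (t i)^2) + 2 * ∑ i, (t i)^3 := by
  set T := ∑ i : Fin n, ∑ j : Fin n, ∑ k : Fin n,
      if i < j ∧ j < k then t i * t j * t k else 0 with hT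
  set A := ∑ i : Fin n, ∑ j : Fin n, if i < j then t i * t j else 0 with hA
  have f1 := sumPair n t
  have hAS : A * (∑ k, t k) = ∑ i : Fin n, ∑ j : Fin n, ∑ k : Fin n,
      if i < j then t i * t j * t k else 0 := by
    rw [hA, Finset.sum_mul]
    refine Finset.sum_congr rfl fun i _ => ?_
    rw [Finset.sum_mul]
    refine Finset.sum_congr rfl fun j _ => ?_
    by_cases hij : i < j
    · simp only [if_pos hij, Finset.mul_sum, mul_assoc]
    · simp only [if_neg hij, zero_mul, Finset.sum_const_zero]
  have key : ∀ i j k : Fin n, (if i < j then t i * t j * t k else 0) =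
      (if k < i ∧ i < j then t i * t j * t k else 0) +
      (if i < j ∧ j < k then t i * t j * t k else 0) +
      (if i < k ∧ k < j then t i * t j * t k else 0) +
      (if i < j then (if i = k then t i * t j * t k else 0) else 0) +
      (if i < j then (if j = k then t i * t j * t k else 0) else 0) := by
    intro i j k
    simp only [Fin.lt_def, Fin.ext_iff]
    split_ifs <;> first | ring1 | (exfalso; omega)
  have hsplit : (∑ i : Fin n, ∑ j : Fin n, ∑ k : Fin n,
      if i < j then t i * t j * t k else 0) =
      (∑ i : Fin n, ∑ j : Fin n, ∑ k : Fin n, if k < i ∧ i < j then t i * t j * t k else 0) +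
      (∑ i : Fin n, ∑ j : Fin n, ∑ k : Fin n, if i < j ∧ j < k then t i * t j * t k else 0) +
      (∑ i : Fin n, ∑ j : Fin n, ∑ k : Fin n, if i < k ∧ k < j then t i * t j * t k else 0) +
      (∑ i : Fin n, ∑ j : Fin n, ∑ k : Fin n,
        if i < j then (if i = k then t i * t j * t k else 0) else 0) +
      (∑ i : Fin n, ∑ j : Fin n, ∑ k : Fin n,
        if i < j then (if j = k then t i * t j * t k else 0) else 0) := by
    simp only [← Finset.sum_add_distrib]
    exact Finset.sum_congr rfl fun i _ => Finset.sum_congr rfl fun j _ =>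
      Finset.sum_congr rfl fun k _ => key i j k
  have hP1 : (∑ i : Fin n, ∑ j : Fin n, ∑ k : Fin n,
      if k < i ∧ i < j then t i * t j * t k else 0) = T := by
    have e1 : (∑ i : Fin n, ∑ j : Fin n, ∑ k : Fin n,
        if k < i ∧ i < j then t i * t j * t k else 0) =
        ∑ i : Fin n, ∑ k : Fin n, ∑ j : Fin n,
        if k < i ∧ i < j then t i * t j * t k else 0 :=
      Finset.sum_congr rfl fun i _ => Finset.sum_comm
    rw [e1, Finset.sum_comm, hT]
    exact Finset.sum_congr rfl fun k _ => Finset.sum_congr rfl fun i _ =>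
      Finset.sum_congr rfl fun j _ => by split_ifs <;> ring
  have hP3 : (∑ i : Fin n, ∑ j : Fin n, ∑ k : Fin n,
      if i < k ∧ k < j then t i * t j * t k else 0) = T := by
    have e1 : (∑ i : Fin n, ∑ j : Fin n, ∑ k : Fin n,
        if i < k ∧ k < j then t i * t j * t k else 0) =
        ∑ i : Fin n, ∑ k : Fin n, ∑ j : Fin n,
        if i < k ∧ k < j then t i * t j * t k else 0 :=
      Finset.sum_congr rfl fun i _ => Finset.sum_comm
    rw [e1, hT]
    exact Finset.sum_congr rfl fun i _ => Finset.sum_congr rfl fun k _ =>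
      Finset.sum_congr rfl fun j _ => by split_ifs <;> ring
  have hP4 : (∑ i : Fin n, ∑ j : Fin n, ∑ k : Fin n,
      if i < j then (if i = k then t i * t j * t k else 0) else 0) =
      ∑ i : Fin n, ∑ j : Fin n, if i < j then t i * t j * t i else 0 := by
    refine Finset.sum_congr rfl fun i _ => Finset.sum_congr rfl fun j _ => ?_
    split_ifs with hij
    · rw [Finset.sum_ite_eq Finset.univ i (fun k => t i * t j * t k)]
      simp
    · simp
  have hP5 : (∑ i : Fin n, ∑ j : Fin n, ∑ k : Fin n,
      if i < j then (if j = k then t i * t j * t k else 0) else 0) =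
      ∑ i : Fin n, ∑ j : Fin n, if i < j then t i * t j * t j else 0 := by
    refine Finset.sum_congr rfl fun i _ => Finset.sum_congr rfl fun j _ => ?_
    split_ifs with hij
    · rw [Finset.sum_ite_eq Finset.univ j (fun k => t i * t j * t k)]
      simp
    · simp
  have hD : (∑ i : Fin n, ∑ j : Fin n, if i < j then t i * t j * t i else 0) +
      (∑ i : Fin n, ∑ j : Fin n, if i < j then t i * t j * t j else 0) =
      (∑ i, (t i)^2) * (∑ i, t i) - ∑ i, (t i)^3 := by
    have key2 : ∀ i j : Fin n, (t i)^2 * t j =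
        (if i < j then t i * t j * t i else 0) + (if j < i then (t i)^2 * t j else 0) +
        (if i = j then t i * t j * t i else 0) := by
      intro i j
      rcases lt_trichotomy i j with hl|he|hg
      · rw [if_pos hl, if_neg (asymm hl), if_neg hl.ne]; ring
      · subst he; split_ifs <;> first | ring1 | (exfalso; exact lt_irrefl i ‹i < i›) | (exfalso; exact ‹¬i = i› rfl)
      · rw [if_neg (asymm hg), if_pos hg, if_neg hg.ne']; ring
    have e0 : (∑ i, (t i)^2) * (∑ i, t i) = ∑ i : Fin n, ∑ j : Fin n, (t i)^2 * t j :=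
      Finset.sum_mul_sum _ _ _ _
    have e1 : (∑ i : Fin n, ∑ j : Fin n, (t i)^2 * t j) =
        (∑ i : Fin n, ∑ j : Fin n, if i < j then t i * t j * t i else 0) +
        (∑ i : Fin n, ∑ j : Fin n, if j < i then (t i)^2 * t j else 0) +
        (∑ i : Fin n, ∑ j : Fin n, if i = j then t i * t j * t i else 0) := by
      simp only [← Finset.sum_add_distrib]
      exact Finset.sum_congr rfl fun i _ => Finset.sum_congr rfl fun j _ => key2 i j
    have e2 : (∑ i : Fin n, ∑ j : Fin n, if j < i then (t i)^2 * t j else 0) =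
        ∑ i : Fin n, ∑ j : Fin n, if i < j then t i * t j * t j else 0 := by
      rw [Finset.sum_comm]
      exact Finset.sum_congr rfl fun i _ => Finset.sum_congr rfl fun j _ => by
        split_ifs <;> ring
    have e3 : (∑ i : Fin n, ∑ j : Fin n, if i = j then t i * t j * t i else 0) =
        ∑ i, (t i)^3 := by
      refine Finset.sum_congr rfl fun i _ => ?_
      rw [Finset.sum_ite_eq Finset.univ i (fun j => t i * t j * t i)]
      simp; ring
    rw [e0, e1, e2, e3]; ring
  have f2 : A * (∑ k, t k) = 3 * T + ((∑ i, (t i)^2) * (∑ i, t i) - ∑ i, (t i)^3) := by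
    rw [hAS, hsplit, hP1, hP3, hP4, hP5, ← hD, ← hT]; ring
  linear_combination (-2 : ℝ) * f2 + (∑ i, t i) * f1

lemma sum_split {n : ℕ} (M : Finset (Fin n)) [Fintype {x : Fin n // x ∈ M}]
    [Fintype {x : Fin n // x ∉ M}] (f : Fin n → ℝ) :
    ∑ i : Fin n, f i =
      (∑ i : {x : Fin n // x ∈ M}, f i) + ∑ i : {x : Fin n // x ∉ M}, f i := by
  rw [← Finset.sum_filter_add_sum_filter_not Finset.univ (· ∈ M) f]
  congr 1
  · exact Finset.sum_subtype _ (by simp) f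
  · exact Finset.sum_subtype _ (by simp) f

/-- In the Curie-Weiss model with three-body interactions, every folding is of the
form (1/Z'')exp(J' Σ_{i<j ∈ M^c} σ_i σ_j): all odd-order interaction terms cancel.
Spins are encoded by Bool, with s(true) = +1, s(false) = -1. -/
theorem stmt17 (n : ℕ) (h J2 J3 : ℝ)
    (s : Bool → ℝ) (hs : s = fun b => if b then 1 else -1)
    (Z : ℝ)
    (hZ : Z = ∑ ω : Fin n → Bool,
      Real.exp (h * ∑ i : Fin n, s (ω i) +
        J2 * (∑ i : Fin n, ∑ j : Fin n, if i < j then s (ω i) * s (ω j) else 0) +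
        J3 * (∑ i : Fin n, ∑ j : Fin n, ∑ k : Fin n,
          if i < j ∧ j < k then s (ω i) * s (ω j) * s (ω k) else 0)))
    (μ : (Fin n → Bool) → ℝ)
    (hμ : ∀ ω, μ ω = Real.exp (h * ∑ i : Fin n, s (ω i) +
        J2 * (∑ i : Fin n, ∑ j : Fin n, if i < j then s (ω i) * s (ω j) else 0) +
        J3 * (∑ i : Fin n, ∑ j : Fin n, ∑ k : Fin n,
          if i < j ∧ j < k then s (ω i) * s (ω j) * s (ω k) else 0)) / Z)
    (M : Finset (Fin n)) (α : {x : Fin n // x ∈ M} → Bool)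
    (glue : ({x : Fin n // x ∉ M} → Bool) → (Fin n → Bool))
    (hglue : ∀ σ i, glue σ i = if hi : i ∈ M then α ⟨i, hi⟩ else σ ⟨i, hi⟩) :
    ∃ J' c : ℝ, 0 < c ∧
      ∀ σ : {x : Fin n // x ∉ M} → Bool,
        μ (glue σ) * μ (glue (fun x => !(σ x))) =
          c * Real.exp (J' * ∑ i : {x : Fin n // x ∉ M}, ∑ j : {x : Fin n // x ∉ M},
            if (i : Fin n) < (j : Fin n) then s (σ i) * s (σ j) else 0) := by
  have hs2 : ∀ b, (s b)^2 = 1 := by subst hs; intro b; cases b <;> norm_num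
  have hs3 : ∀ b, (s b)^3 = s b := by subst hs; intro b; cases b <;> norm_num
  have hsneg : ∀ b, s (!b) = - s b := by subst hs; intro b; cases b <;> norm_num
  have hZpos : 0 < Z := by
    rw [hZ]; exact Finset.sum_pos (fun ω _ => Real.exp_pos _) Finset.univ_nonempty
  set P : ℝ := ∑ i : {x : Fin n // x ∈ M}, s (α i) with hP
  set m' : ℝ := (Fintype.card {x : Fin n // x ∉ M} : ℝ) with hm'
  refine ⟨2*J2 + 2*J3*P,
    Real.exp (J2*(P^2 - (n:ℝ) + m') + J3*((P^3 - 3*(n:ℝ)*P + 2*P)/3 + P*m') + 2*h*P) / Z^2,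
    by positivity, fun σ => ?_⟩
  set t : Fin n → ℝ := fun i => s (glue σ i) with ht
  set u : Fin n → ℝ := fun i => s (glue (fun x => !(σ x)) i) with hu
  set Sσ : ℝ := ∑ i : {x : Fin n // x ∉ M}, s (σ i) with hSσ
  have htt : ∀ i, s (glue σ i) = t i := fun i => rfl
  have huu : ∀ i, s (glue (fun x => !(σ x)) i) = u i := fun i => rfl
  have htm : ∀ i : {x : Fin n // x ∈ M}, t (i : Fin n) = s (α i) := by
    intro i; simp only [ht]; rw [hglue, dif_pos i.2]
  have htm' : ∀ i : {x : Fin n // x ∉ M}, t (i : Fin n) = s (σ i) := by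
    intro i; simp only [ht]; rw [hglue, dif_neg i.2]
  have hum : ∀ i : {x : Fin n // x ∈ M}, u (i : Fin n) = s (α i) := by
    intro i; simp only [hu]; rw [hglue, dif_pos i.2]
  have hum' : ∀ i : {x : Fin n // x ∉ M}, u (i : Fin n) = - s (σ i) := by
    intro i; simp only [hu]; rw [hglue, dif_neg i.2]; exact hsneg _
  have hTsum : ∑ i, t i = P + Sσ := by
    rw [sum_split M t, hP, hSσ]
    congr 1
    · exact Finset.sum_congr rfl fun i _ => htm i
    · exact Finset.sum_congr rfl fun i _ => htm' i
  have hUsum : ∑ i, u i = P - Sσ := by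
    rw [sum_split M u]
    have h1 : (∑ i : {x : Fin n // x ∈ M}, u i) = P :=
      (Finset.sum_congr rfl fun i _ => hum i).trans hP.symm
    have h2 : (∑ i : {x : Fin n // x ∉ M}, u i) = -Sσ := by
      rw [hSσ, ← Finset.sum_neg_distrib]
      exact Finset.sum_congr rfl fun i _ => hum' i
    rw [h1, h2]; ring
  have hTsq : ∑ i, (t i)^2 = (n : ℝ) := by
    calc ∑ i, (t i)^2 = ∑ _i : Fin n, (1:ℝ) :=
          Finset.sum_congr rfl fun i _ => by simp only [ht]; exact hs2 _
      _ = (n : ℝ) := by simp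
  have hUsq : ∑ i, (u i)^2 = (n : ℝ) := by
    calc ∑ i, (u i)^2 = ∑ _i : Fin n, (1:ℝ) :=
          Finset.sum_congr rfl fun i _ => by simp only [hu]; exact hs2 _
      _ = (n : ℝ) := by simp
  have hTcube : ∑ i, (t i)^3 = ∑ i, t i :=
    Finset.sum_congr rfl fun i _ => by simp only [ht]; exact hs3 _
  have hUcube : ∑ i, (u i)^3 = ∑ i, u i :=
    Finset.sum_congr rfl fun i _ => by simp only [hu]; exact hs3 _
  set w : Fin n → ℝ := fun i => if i ∈ M then 0 else t i with hw
  have hwm : ∀ i : {x : Fin n // x ∈ M}, w (i : Fin n) = 0 := by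
    intro i; simp only [hw]; rw [if_pos i.2]
  have hwm' : ∀ i : {x : Fin n // x ∉ M}, w (i : Fin n) = s (σ i) := by
    intro i; simp only [hw]; rw [if_neg i.2]; exact htm' i
  have hWsum : ∑ i, w i = Sσ := by
    calc ∑ i, w i = (∑ i : {x : Fin n // x ∈ M}, w i) + ∑ i : {x : Fin n // x ∉ M}, w i :=
          sum_split M w
      _ = 0 + Sσ := by
          rw [Finset.sum_eq_zero fun i _ => hwm i,
            (Finset.sum_congr rfl fun i _ => hwm' i).trans hSσ.symm]
      _ = Sσ := by ring
  have hWsq : ∑ i, (w i)^2 = m' := by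
    have hz : (∑ i : {x : Fin n // x ∈ M}, (w (i:Fin n))^2) = 0 :=
      Finset.sum_eq_zero fun i _ => by simp [hwm i]
    have ho : (∑ i : {x : Fin n // x ∉ M}, (w (i:Fin n))^2)
        = ∑ _i : {x : Fin n // x ∉ M}, (1:ℝ) :=
      Finset.sum_congr rfl fun i _ => by rw [hwm' i]; exact hs2 (σ i)
    calc ∑ i, (w i)^2
        = (∑ i : {x : Fin n // x ∈ M}, (w (i:Fin n))^2) +
          ∑ i : {x : Fin n // x ∉ M}, (w (i:Fin n))^2 := sum_split M (fun i => (w i)^2)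
      _ = 0 + ∑ _i : {x : Fin n // x ∉ M}, (1:ℝ) := by rw [hz, ho]
      _ = m' := by rw [hm']; simp
  have hQw : (∑ i : Fin n, ∑ j : Fin n, if i < j then w i * w j else 0) =
      ∑ i : {x : Fin n // x ∉ M}, ∑ j : {x : Fin n // x ∉ M},
      if (i : Fin n) < (j : Fin n) then s (σ i) * s (σ j) else 0 := by
    have inner0 : ∀ i : {x : Fin n // x ∈ M},
        (∑ j : Fin n, if (i : Fin n) < j then w (i:Fin n) * w j else 0) = 0 :=
      fun i => Finset.sum_eq_zero fun j _ => by rw [hwm i]; split_ifs <;> simp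
    have inner1 : ∀ i : {x : Fin n // x ∉ M},
        (∑ j : Fin n, if (i : Fin n) < j then w (i:Fin n) * w j else 0) =
        ∑ j : {x : Fin n // x ∉ M},
          if (i : Fin n) < (j : Fin n) then s (σ i) * s (σ j) else 0 := by
      intro i
      have hz : (∑ j : {x : Fin n // x ∈ M},
          if (i:Fin n) < (j:Fin n) then w (i:Fin n) * w (j:Fin n) else 0) = 0 :=
        Finset.sum_eq_zero fun j _ => by rw [hwm j]; split_ifs <;> simp
      have ho : (∑ j : {x : Fin n // x ∉ M},
          if (i:Fin n) < (j:Fin n) then w (i:Fin n) * w (j:Fin n) else 0) =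
          ∑ j : {x : Fin n // x ∉ M},
          if (i : Fin n) < (j : Fin n) then s (σ i) * s (σ j) else 0 :=
        Finset.sum_congr rfl fun j _ => by rw [hwm' i, hwm' j]
      calc (∑ j : Fin n, if (i : Fin n) < j then w (i:Fin n) * w j else 0)
          = (∑ j : {x : Fin n // x ∈ M}, if (i:Fin n) < (j:Fin n) then w (i:Fin n) * w (j:Fin n) else 0) +
            ∑ j : {x : Fin n // x ∉ M}, if (i:Fin n) < (j:Fin n) then w (i:Fin n) * w (j:Fin n) else 0 :=
            sum_split M (fun j => if (i : Fin n) < j then w (i:Fin n) * w j else 0)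
        _ = 0 + ∑ j : {x : Fin n // x ∉ M},
              if (i : Fin n) < (j : Fin n) then s (σ i) * s (σ j) else 0 := by rw [hz, ho]
        _ = _ := by ring
    have hz : (∑ i : {x : Fin n // x ∈ M}, ∑ j : Fin n,
        if (i:Fin n) < j then w (i:Fin n) * w j else 0) = 0 :=
      Finset.sum_eq_zero fun i _ => inner0 i
    have ho : (∑ i : {x : Fin n // x ∉ M}, ∑ j : Fin n,
        if (i:Fin n) < j then w (i:Fin n) * w j else 0) =
        ∑ i : {x : Fin n // x ∉ M}, ∑ j : {x : Fin n // x ∉ M},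
          if (i : Fin n) < (j : Fin n) then s (σ i) * s (σ j) else 0 :=
      Finset.sum_congr rfl fun i _ => inner1 i
    calc (∑ i : Fin n, ∑ j : Fin n, if i < j then w i * w j else 0)
        = (∑ i : {x : Fin n // x ∈ M}, ∑ j : Fin n,
            if (i:Fin n) < j then w (i:Fin n) * w j else 0) +
          ∑ i : {x : Fin n // x ∉ M}, ∑ j : Fin n,
            if (i:Fin n) < j then w (i:Fin n) * w j else 0 :=
          sum_split M (fun i => ∑ j : Fin n, if i < j then w i * w j else 0)
      _ = 0 + ∑ i : {x : Fin n // x ∉ M}, ∑ j : {x : Fin n // x ∉ M},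
            if (i : Fin n) < (j : Fin n) then s (σ i) * s (σ j) else 0 := by rw [hz, ho]
      _ = _ := by ring
  have e5 : 2 * (∑ i : {x : Fin n // x ∉ M}, ∑ j : {x : Fin n // x ∉ M},
      if (i : Fin n) < (j : Fin n) then s (σ i) * s (σ j) else 0) = Sσ^2 - m' := by
    have pw := sumPair n w
    rw [hWsum, hWsq, hQw] at pw
    exact pw
  have e1 := sumPair n t
  rw [hTsum, hTsq] at e1
  have e2 := sumTriple n t
  rw [hTcube, hTsq, hTsum] at e2
  have e3 := sumPair n u
  rw [hUsum, hUsq] at e3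
  have e4 := sumTriple n u
  rw [hUcube, hUsq, hUsum] at e4
  rw [hμ (glue σ), hμ (glue (fun x => !(σ x)))]
  rw [div_mul_div_comm, ← Real.exp_add, div_mul_eq_mul_div, ← Real.exp_add,
    show Z * Z = Z^2 by ring]
  congr 1
  congr 1
  simp only [htt, huu]
  rw [hTsum, hUsum]
  linear_combination (J2/2)*e1 + (J3/6)*e2 + (J2/2)*e3 + (J3/6)*e4 - (J2 + J3*P)*e5
end
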